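/- The subgroup H = J₃^{2} of the cactus group J₃ generated by s₁₂ and s₂₃ is isomorphic to the free product (ℤ/2ℤ) * (ℤ/2ℤ), and hence is isomorphic to J₃ itself. -/

import Mathlib

/-- Generators of the cactus group `J₃`. -/
inductive CactusGen : Type
  | s12 | s23 | s13
  deriving DecidableEq

open FreeGroup in
/-- Relators of the cactus group `J₃`:
`s₁₂² = s₂₃² = s₁₃² = 1`, `s₁₂·s₁₃ = s₁₃·s₂₃`, `s₂₃·s₁₃ = s₁₃·s₁₂`. -/
def cactusRels : Set (FreeGroup CactusGen) :=
  { of .s12 * of .s12,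
    of .s23 * of .s23,
    of .s13 * of .s13,
    of .s12 * of .s13 * (of .s13 * of .s23)⁻¹,
    of .s23 * of .s13 * (of .s13 * of .s12)⁻¹ }

/-- The cactus group `J₃` as a presented group. -/
abbrev J3 : Type := PresentedGroup cactusRels

def s12 : J3 := PresentedGroup.of .s12
def s23 : J3 := PresentedGroup.of .s23
def s13 : J3 := PresentedGroup.of .s13

/-- The subgroup `H = J₃^{2}` of `J₃` generated by `s₁₂` and `s₂₃`. -/
def H : Subgroup J3 := Subgroup.closure {s12, s23}

/-!
Sending `s₁₂ ↦ sr 0` and `s₁₃ ↦ sr 1` identifies `J₃` with the infinite dihedral group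
`D∞ = ⟨a, b | a² = b² = 1⟩ ≅ ℤ/2 ∗ ℤ/2`: the relations of `J₃` say precisely that `s₂₃` is the
redundant generator `s₁₃ s₁₂ s₁₃ ↦ sr 2`. Hence `H` corresponds to `⟨sr 0, sr 2⟩ ≤ D∞`, which is
the image of the endomorphism of `D∞` induced by doubling on `ℤ`, and this endomorphism is
injective.
-/

open Multiplicative

section ZModPowers

variable {n : ℕ} {G : Type*} [Group G]

def zmodPowersHom (c : G) (hc : c ^ n = 1) : Multiplicative (ZMod n) →* G :=
  AddMonoidHom.toMultiplicativeLeft <|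
    ZMod.lift n ⟨zmultiplesHom (Additive G) (Additive.ofMul c), by
      rw [zmultiplesHom_apply, natCast_zsmul, ← ofMul_pow, hc, ofMul_one]⟩

@[simp] theorem zmodPowersHom_ofAdd_intCast (c : G) (hc : c ^ n = 1) (k : ℤ) :
    zmodPowersHom c hc (ofAdd (k : ZMod n)) = c ^ k := by
  change Additive.toMul (ZMod.lift n _ (k : ZMod n)) = c ^ k
  rw [ZMod.lift_coe, zmultiplesHom_apply, ← ofMul_zpow, toMul_ofMul]

@[simp] theorem zmodPowersHom_ofAdd_one (c : G) (hc : c ^ n = 1) :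
    zmodPowersHom c hc (ofAdd 1) = c := by
  simpa using zmodPowersHom_ofAdd_intCast c hc 1

theorem MonoidHom.ext_zmod {f g : Multiplicative (ZMod n) →* G} (h : f (ofAdd 1) = g (ofAdd 1)) :
    f = g := by
  refine MonoidHom.ext fun x => ?_
  obtain ⟨k, hk⟩ := ZMod.intCast_surjective (toAdd x)
  have hx : x = ofAdd 1 ^ k := by rw [← ofAdd_zsmul, zsmul_one, hk, ofAdd_toAdd]
  rw [hx, map_zpow, map_zpow, h]

end ZModPowers

namespace DihedralGroup

variable {m n : ℕ} {G : Type*} [Group G]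

def lift (a b : G) (ha : a ^ 2 = 1) (hb : b ^ 2 = 1) (hab : (a * b) ^ n = 1) :
    DihedralGroup n →* G where
  toFun
    | r i => zmodPowersHom (a * b) hab (ofAdd i)
    | sr i => a * zmodPowersHom (a * b) hab (ofAdd i)
  map_one' := by
    change zmodPowersHom _ _ (ofAdd 0) = 1
    rw [ofAdd_zero, map_one]
  map_mul' := by
    set ψ := zmodPowersHom (a * b) hab
    have hinv : ∀ {x : G}, x ^ 2 = 1 → x⁻¹ = x := fun {x} hx =>
      inv_eq_of_mul_eq_one_right ((sq x).symm.trans hx)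
    -- `a` conjugates the rotation `a * b` to its inverse `b * a`
    have hconj (i : ZMod n) : ψ (ofAdd i) * a = a * ψ (ofAdd (-i)) := by
      obtain ⟨k, rfl⟩ := ZMod.intCast_surjective i
      rw [← Int.cast_neg, zmodPowersHom_ofAdd_intCast, zmodPowersHom_ofAdd_intCast, zpow_neg,
        ← inv_zpow, mul_inv_rev, hinv ha, hinv hb]
      exact ((SemiconjBy.zpow_right (mul_assoc a b a).symm k)).symm
    rintro (i | i) (j | j)
    · change ψ (ofAdd (i + j)) = ψ (ofAdd i) * ψ (ofAdd j)
      rw [ofAdd_add, map_mul]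
    · change a * ψ (ofAdd (j - i)) = ψ (ofAdd i) * (a * ψ (ofAdd j))
      rw [← mul_assoc, hconj, mul_assoc, ← map_mul, ← ofAdd_add, neg_add_eq_sub]
    · change a * ψ (ofAdd (i + j)) = a * ψ (ofAdd i) * ψ (ofAdd j)
      rw [ofAdd_add, map_mul, mul_assoc]
    · change ψ (ofAdd (j - i)) = a * ψ (ofAdd i) * (a * ψ (ofAdd j))
      rw [mul_assoc a, ← mul_assoc (ψ _), hconj, ← mul_assoc, ← mul_assoc, ← sq, ha, one_mul,
        ← map_mul, ← ofAdd_add, neg_add_eq_sub]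

@[simp] theorem lift_sr_zero (a b : G) (ha : a ^ 2 = 1) (hb : b ^ 2 = 1) (hab : (a * b) ^ n = 1) :
    lift a b ha hb hab (sr 0) = a := by
  change a * zmodPowersHom (a * b) hab (ofAdd 0) = a
  rw [ofAdd_zero, map_one, mul_one]

@[simp] theorem lift_sr_one (a b : G) (ha : a ^ 2 = 1) (hb : b ^ 2 = 1) (hab : (a * b) ^ n = 1) :
    lift a b ha hb hab (sr 1) = b := by
  change a * zmodPowersHom (a * b) hab (ofAdd 1) = b
  rw [zmodPowersHom_ofAdd_one, ← mul_assoc, ← sq, ha, one_mul]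

theorem closure_sr_zero_sr_one : Subgroup.closure {(sr 0 : DihedralGroup n), sr 1} = ⊤ := by
  refine eq_top_iff.mpr fun x _ => ?_
  have h0 : (sr 0 : DihedralGroup n) ∈ Subgroup.closure {sr 0, sr 1} :=
    Subgroup.subset_closure (by simp)
  have h1 : (sr 1 : DihedralGroup n) ∈ Subgroup.closure {sr 0, sr 1} :=
    Subgroup.subset_closure (by simp)
  have hr : ∀ i : ZMod n, r i ∈ Subgroup.closure {(sr 0 : DihedralGroup n), sr 1} := fun i => by
    have := zpow_mem (mul_mem h0 h1) (ZMod.cast i : ℤ)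
    rwa [sr_mul_sr, sub_zero, r_one_zpow, ZMod.intCast_zmod_cast] at this
  rcases x with i | i
  · exact hr i
  · simpa [sr_mul_r] using mul_mem h0 (hr i)

theorem hom_ext {f g : DihedralGroup n →* G} (h0 : f (sr 0) = g (sr 0)) (h1 : f (sr 1) = g (sr 1)) :
    f = g :=
  MonoidHom.eq_of_eqOn_dense closure_sr_zero_sr_one (by simp [Set.EqOn, h0, h1])

def map (f : ZMod m →+ ZMod n) : DihedralGroup m →* DihedralGroup n where
  toFun
    | r i => r (f i)
    | sr i => sr (f i)
  map_one' := congrArg r (map_zero f)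
  map_mul' := by rintro (i | i) (j | j) <;> simp [map_add, map_sub]

@[simp] theorem map_r (f : ZMod m →+ ZMod n) (i : ZMod m) : map f (r i) = r (f i) := rfl
@[simp] theorem map_sr (f : ZMod m →+ ZMod n) (i : ZMod m) : map f (sr i) = sr (f i) := rfl

theorem map_injective {f : ZMod m →+ ZMod n} (hf : Function.Injective f) :
    Function.Injective (map f) := by
  rintro (i | i) (j | j) h <;> simp_all [hf.eq_iff]

theorem range_map (f : ZMod m →+ ZMod n) :
    (map f).range = Subgroup.closure {sr 0, sr (f 1)} := by
  rw [MonoidHom.range_eq_map, ← closure_sr_zero_sr_one, MonoidHom.map_closure,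
    Set.image_pair, map_sr, map_sr, map_zero]

def mulEquivCoprodZModTwo :
    DihedralGroup 0 ≃* Monoid.Coprod (Multiplicative (ZMod 2)) (Multiplicative (ZMod 2)) :=
  have hgen : (ofAdd 1 : Multiplicative (ZMod 2)) ^ 2 = 1 := rfl
  have hsr (i : ZMod 0) : (sr i) ^ 2 = 1 := by rw [sq, sr_mul_self]
  MonoidHom.toMulEquiv
    (lift (Monoid.Coprod.inl (ofAdd 1)) (Monoid.Coprod.inr (ofAdd 1))
      (by rw [← map_pow, hgen, map_one]) (by rw [← map_pow, hgen, map_one]) (pow_zero _))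
    (Monoid.Coprod.lift (zmodPowersHom (sr 0) (hsr 0)) (zmodPowersHom (sr 1) (hsr 1)))
    (hom_ext (by simp) (by simp))
    (Monoid.Coprod.hom_ext (MonoidHom.ext_zmod (by simp)) (MonoidHom.ext_zmod (by simp)))

end DihedralGroup

namespace J3

open DihedralGroup

theorem s12_sq : s12 ^ 2 = 1 := by
  rw [sq]; exact PresentedGroup.one_of_mem (by simp [cactusRels])

theorem s13_sq : s13 ^ 2 = 1 := by
  rw [sq]; exact PresentedGroup.one_of_mem (by simp [cactusRels])

theorem s23_mul_s13 : s23 * s13 = s13 * s12 := by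
  rw [← mul_inv_eq_one]; exact PresentedGroup.one_of_mem (by simp [cactusRels])

theorem s13_mul_s12_mul_s13 : s13 * s12 * s13 = s23 := by
  rw [← s23_mul_s13, mul_assoc, ← sq, s13_sq, mul_one]

def toDihedral : J3 →* DihedralGroup 0 :=
  PresentedGroup.toGroup (f := fun | .s12 => sr 0 | .s23 => sr 2 | .s13 => sr 1) <| by
    norm_num [cactusRels, r_zero]

@[simp] theorem toDihedral_s12 : toDihedral s12 = sr 0 := PresentedGroup.toGroup.of _
@[simp] theorem toDihedral_s23 : toDihedral s23 = sr 2 := PresentedGroup.toGroup.of _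
@[simp] theorem toDihedral_s13 : toDihedral s13 = sr 1 := PresentedGroup.toGroup.of _

def ofDihedral : DihedralGroup 0 →* J3 := lift s12 s13 s12_sq s13_sq (pow_zero _)

@[simp] theorem ofDihedral_sr_zero : ofDihedral (sr 0) = s12 := lift_sr_zero ..
@[simp] theorem ofDihedral_sr_one : ofDihedral (sr 1) = s13 := lift_sr_one ..

theorem ofDihedral_sr_two : ofDihedral (sr 2) = s23 := by
  have : (sr 2 : DihedralGroup 0) = sr 1 * sr 0 * sr 1 := by norm_num
  rw [this, map_mul, map_mul, ofDihedral_sr_zero, ofDihedral_sr_one, s13_mul_s12_mul_s13]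

def mulEquivDihedral : J3 ≃* DihedralGroup 0 :=
  MonoidHom.toMulEquiv toDihedral ofDihedral
    (PresentedGroup.ext fun
      | .s12 => (congrArg ofDihedral toDihedral_s12).trans ofDihedral_sr_zero
      | .s23 => (congrArg ofDihedral toDihedral_s23).trans ofDihedral_sr_two
      | .s13 => (congrArg ofDihedral toDihedral_s13).trans ofDihedral_sr_one)
    (hom_ext (by simp) (by simp))

theorem map_H_mulEquivDihedral :
    H.map (mulEquivDihedral : J3 →* DihedralGroup 0) =
      (DihedralGroup.map (AddMonoidHom.mulLeft 2)).range := by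
  rw [range_map, H, MonoidHom.map_closure, Set.image_pair]
  simp [mulEquivDihedral]

noncomputable def H_mulEquivDihedral : H ≃* DihedralGroup 0 :=
  (mulEquivDihedral.subgroupMap H).trans <| (MulEquiv.subgroupCongr map_H_mulEquivDihedral).trans
    (MonoidHom.ofInjective (map_injective (mul_right_injective₀ two_ne_zero))).symm

end J3

/-- the subgroup `H = J₃^{2}` generated by `s₁₂` and `s₂₃` is isomorphic
to `(ℤ/2ℤ) ∗ (ℤ/2ℤ)`, hence isomorphic to `J₃` itself. -/
theorem H_iso_freeProduct_and_J3 :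
    Nonempty (H ≃* Monoid.Coprod (Multiplicative (ZMod 2)) (Multiplicative (ZMod 2))) ∧
      Nonempty (H ≃* J3) :=
  ⟨⟨J3.H_mulEquivDihedral.trans DihedralGroup.mulEquivCoprodZModTwo⟩,
    ⟨J3.H_mulEquivDihedral.trans J3.mulEquivDihedral.symm⟩⟩
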